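/- Any covering of the plane by a brick pattern of rectangles with side lengths l1 ≤ l2 has multiplicity at most 3: every point of ℝ² lies in at most 3 bricks, and moreover any point has a neighborhood (a ball of radius ≤ l1/2) meeting at most 3 bricks. -/

import Mathlib

open Metric Set

noncomputable section

/-- The word length of `g` with respect to a symmetrized generating set `S ∪ S⁻¹`. -/
noncomputable def wordLength {G : Type*} [Group G] (S : Set G) (g : G) : ℕ :=
  sInf {n : ℕ | ∃ l : List G, l.length = n ∧ (∀ x ∈ l, x ∈ S ∨ x⁻¹ ∈ S) ∧ l.prod = g}

/-- The word metric on a group with respect to a generating set `S`. -/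
noncomputable def wordDist {G : Type*} [Group G] (S : Set G) (a b : G) : ℝ :=
  (wordLength S (a⁻¹ * b) : ℝ)

/-- `AsdimLE d n` : the space with distance function `d` has asymptotic dimension at most `n`:
for every `D > 0` there are `B ≥ 0` and families `U 0, ..., U n` of subsets covering the space,
all of whose members have diameter at most `B`, and such that distinct members of the same
family are at mutual distance greater than `D`. -/
def AsdimLE {X : Type*} (d : X → X → ℝ) (n : ℕ) : Prop :=
  ∀ D : ℝ, 0 < D → ∃ B : ℝ, 0 ≤ B ∧ ∃ U : Fin (n + 1) → Set (Set X),
    (∀ x : X, ∃ i : Fin (n + 1), ∃ u ∈ U i, x ∈ u) ∧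
    (∀ i : Fin (n + 1), ∀ u ∈ U i, ∀ x ∈ u, ∀ y ∈ u, d x y ≤ B) ∧
    (∀ i : Fin (n + 1), ∀ u ∈ U i, ∀ v ∈ U i, u ≠ v → ∀ x ∈ u, ∀ y ∈ v, D < d x y)

/-- The asymptotic dimension of a space with distance function `d`, in `ℕ∞`. -/
noncomputable def asdimD {X : Type*} (d : X → X → ℝ) : ℕ∞ :=
  ⨅ (n : ℕ) (_ : AsdimLE d n), (n : ℕ∞)

/-- The asymptotic dimension of a pseudometric space. -/
noncomputable def asdim (X : Type*) [PseudoMetricSpace X] : ℕ∞ :=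
  asdimD (fun x y : X => dist x y)

/-- The brick in row `i`, column `j` of a running-bond brick pattern with sides `l1 ≤ l2`:
rows of height `l1`, bricks of width `l2`, odd rows offset horizontally by `l2 / 2`. -/
def brick (l1 l2 : ℝ) (i j : ℤ) : Set (EuclideanSpace ℝ (Fin 2)) :=
  {p | (j : ℝ) * l2 + (if Even i then 0 else l2 / 2) ≤ p 0 ∧
       p 0 ≤ (j : ℝ) * l2 + (if Even i then 0 else l2 / 2) + l2 ∧
       (i : ℝ) * l1 ≤ p 1 ∧ p 1 ≤ ((i : ℝ) + 1) * l1}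


section BrickAux

open scoped Classical

def off (l2 : ℝ) (i : ℤ) : ℝ := if Even i then 0 else l2 / 2

lemma mem_brick_iff {l1 l2 : ℝ} {i j : ℤ} {p : EuclideanSpace ℝ (Fin 2)} :
    p ∈ brick l1 l2 i j ↔
      (j : ℝ) * l2 + off l2 i ≤ p 0 ∧ p 0 ≤ (j : ℝ) * l2 + off l2 i + l2 ∧
      (i : ℝ) * l1 ≤ p 1 ∧ p 1 ≤ ((i : ℝ) + 1) * l1 := Iff.rfl

lemma off_nonneg {l2 : ℝ} (h : 0 ≤ l2) (i : ℤ) : 0 ≤ off l2 i := by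
  unfold off; split <;> linarith

lemma off_le {l2 : ℝ} (h : 0 ≤ l2) (i : ℤ) : off l2 i ≤ l2 / 2 := by
  unfold off; split <;> linarith

lemma off_sub (l2 : ℝ) (i : ℤ) :
    off l2 i - off l2 (i - 1) = l2 / 2 ∨ off l2 i - off l2 (i - 1) = -(l2 / 2) := by
  rcases Int.even_or_odd i with he | ho
  · right; simp [off, Int.even_sub_one, he]
  · left; have hne : ¬ Even i := Int.not_even_iff_odd.mpr ho
    simp [off, Int.even_sub_one, hne]

lemma abs_coord_le_dist (q y : EuclideanSpace ℝ (Fin 2)) (k : Fin 2) : |q k - y k| ≤ dist q y := by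
  rw [EuclideanSpace.dist_eq, ← Real.sqrt_sq (abs_nonneg (q k - y k)), sq_abs]
  apply Real.sqrt_le_sqrt
  have := Finset.single_le_sum (f := fun i => dist (q i) (y i) ^ 2) (fun i _ => sq_nonneg _) (Finset.mem_univ k)
  simpa [Real.dist_eq, sq_abs] using this

lemma brick_isClosed (l1 l2 : ℝ) (i j : ℤ) : IsClosed (brick l1 l2 i j) := by
  have : brick l1 l2 i j = (fun p : EuclideanSpace ℝ (Fin 2) => p 0) ⁻¹'
      Icc ((j : ℝ) * l2 + (if Even i then 0 else l2 / 2)) ((j : ℝ) * l2 + (if Even i then 0 else l2 / 2) + l2) ∩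
      (fun p : EuclideanSpace ℝ (Fin 2) => p 1) ⁻¹' Icc ((i : ℝ) * l1) (((i : ℝ) + 1) * l1) := by
    ext p; simp [brick, and_assoc]
  rw [this]
  exact (isClosed_Icc.preimage (PiLp.continuous_apply (p := 2) (β := fun _ : Fin 2 => ℝ) 0)).inter (isClosed_Icc.preimage (PiLp.continuous_apply (p := 2) (β := fun _ : Fin 2 => ℝ) 1))

lemma brick_nonempty {l1 l2 : ℝ} (hl1 : 0 < l1) (hl2 : 0 < l2) (i j : ℤ) :
    (brick l1 l2 i j).Nonempty := by
  refine ⟨(WithLp.equiv 2 (∀ _ : Fin 2, ℝ)).symm ![(j:ℝ)*l2 + (if Even i then 0 else l2/2), (i:ℝ)*l1], ?_⟩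
  have hoff : (0:ℝ) ≤ (if Even i then 0 else l2/2) := by split <;> linarith
  refine ⟨?_, ?_, ?_, ?_⟩ <;> simp [WithLp.equiv_symm_apply, PiLp.toLp_apply] <;> linarith

lemma encard_triple_le {α : Type*} (p1 p2 p3 : α) : ({p1, p2, p3} : Set α).encard ≤ 3 := by
  calc ({p1, p2, p3} : Set α).encard ≤ ({p2, p3} : Set α).encard + 1 := Set.encard_insert_le _ _
    _ ≤ (({p3} : Set α).encard + 1) + 1 := by gcongr; exact Set.encard_insert_le _ _
    _ = 3 := by rw [Set.encard_singleton]; rfl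

lemma encard_le_three {α : Type*} {T : Set α} {p1 p2 p3 p4 : α}
    (hsub : T ⊆ {p1, p2, p3, p4}) (h : p1 ∉ T ∨ p2 ∉ T ∨ p3 ∉ T ∨ p4 ∉ T) :
    T.encard ≤ 3 := by
  rcases h with h | h | h | h
  · refine le_trans (Set.encard_mono (fun q hq => ?_)) (encard_triple_le p2 p3 p4)
    rcases hsub hq with rfl | hm
    · exact absurd hq h
    · exact hm
  · refine le_trans (Set.encard_mono (fun q hq => ?_)) (encard_triple_le p1 p3 p4)
    rcases hsub hq with rfl | rfl | hm
    · exact mem_insert _ _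
    · exact absurd hq h
    · exact mem_insert_iff.2 (Or.inr hm)
  · refine le_trans (Set.encard_mono (fun q hq => ?_)) (encard_triple_le p1 p2 p4)
    rcases hsub hq with rfl | rfl | rfl | hm
    · exact mem_insert _ _
    · simp
    · exact absurd hq h
    · simp [hm]
  · refine le_trans (Set.encard_mono (fun q hq => ?_)) (encard_triple_le p1 p2 p3)
    rcases hsub hq with rfl | rfl | rfl | rfl
    · exact mem_insert _ _
    · simp
    · simp
    · exact absurd hq h

end BrickAux

set_option maxHeartbeats 1000000 in
/-- A brick pattern of rectangles with sides `l1 ≤ l2` has multiplicity at most `3`: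
every point of the plane lies in at most `3` bricks, and moreover every point has a
neighborhood (a ball of radius at most `l1 / 2`) meeting at most `3` bricks. -/
theorem stmt11 (l1 l2 : ℝ) (h1 : 0 < l1) (h12 : l1 ≤ l2)
    (x : EuclideanSpace ℝ (Fin 2)) :
    {p : ℤ × ℤ | x ∈ brick l1 l2 p.1 p.2}.encard ≤ 3 ∧
    ∃ r : ℝ, 0 < r ∧ r ≤ l1 / 2 ∧
      {p : ℤ × ℤ | (brick l1 l2 p.1 p.2 ∩ Metric.ball x r).Nonempty}.encard ≤ 3 := by
  classical
  have hl2 : 0 < l2 := lt_of_lt_of_le h1 h12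
  have hpart1 : {p : ℤ × ℤ | x ∈ brick l1 l2 p.1 p.2}.encard ≤ 3 := by
    have hrow : ∀ i j : ℤ, x ∈ brick l1 l2 i j → i = ⌊x 1 / l1⌋ ∨ i = ⌊x 1 / l1⌋ - 1 := by
      intro i j hij
      obtain ⟨_, _, h3, h4⟩ := mem_brick_iff.mp hij
      have e1 : i ≤ ⌊x 1 / l1⌋ := Int.le_floor.2 ((le_div_iff₀ h1).2 h3)
      have e2 : ⌊x 1 / l1⌋ ≤ i + 1 := by
        have : x 1 / l1 ≤ ((i + 1 : ℤ) : ℝ) := by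
          rw [div_le_iff₀ h1]; push_cast; linarith
        simpa using Int.floor_le_floor this
      omega
    have hcol : ∀ i j : ℤ, x ∈ brick l1 l2 i j →
        j = ⌊(x 0 - off l2 i) / l2⌋ ∨ j = ⌊(x 0 - off l2 i) / l2⌋ - 1 := by
      intro i j hij
      obtain ⟨h3, h4, _, _⟩ := mem_brick_iff.mp hij
      have e1 : j ≤ ⌊(x 0 - off l2 i) / l2⌋ := Int.le_floor.2 ((le_div_iff₀ hl2).2 (by linarith))
      have e2 : ⌊(x 0 - off l2 i) / l2⌋ ≤ j + 1 := by
        have : (x 0 - off l2 i) / l2 ≤ ((j + 1 : ℤ) : ℝ) := by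
          rw [div_le_iff₀ hl2]; push_cast; linarith
        simpa using Int.floor_le_floor this
      omega
    have hsub : {p : ℤ × ℤ | x ∈ brick l1 l2 p.1 p.2} ⊆
        {(⌊x 1 / l1⌋, ⌊(x 0 - off l2 ⌊x 1 / l1⌋) / l2⌋),
         (⌊x 1 / l1⌋, ⌊(x 0 - off l2 ⌊x 1 / l1⌋) / l2⌋ - 1),
         (⌊x 1 / l1⌋ - 1, ⌊(x 0 - off l2 (⌊x 1 / l1⌋ - 1)) / l2⌋),
         (⌊x 1 / l1⌋ - 1, ⌊(x 0 - off l2 (⌊x 1 / l1⌋ - 1)) / l2⌋ - 1)} := by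
      rintro ⟨i, j⟩ hp
      have hi := hrow i j hp
      simp only [mem_insert_iff, mem_singleton_iff, Prod.mk.injEq]
      rcases hi with hi | hi <;> subst hi <;> rcases hcol _ j hp with hj | hj <;> tauto
    refine encard_le_three hsub ?_
    by_contra hcon
    push_neg at hcon
    obtain ⟨c1, c2, c3, c4⟩ := hcon
    simp only [mem_setOf_eq] at c1 c2 c3 c4
    set f := ⌊x 1 / l1⌋ with hfdef
    set g0 := ⌊(x 0 - off l2 f) / l2⌋ with hg0
    set g1 := ⌊(x 0 - off l2 (f - 1)) / l2⌋ with hg1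
    obtain ⟨d1, _, _, _⟩ := mem_brick_iff.mp c1
    obtain ⟨_, d2, _, _⟩ := mem_brick_iff.mp c2
    obtain ⟨d3, _, _, _⟩ := mem_brick_iff.mp c3
    obtain ⟨_, d4, _, _⟩ := mem_brick_iff.mp c4
    push_cast at d2 d4
    have ha0 : x 0 = (g0 : ℝ) * l2 + off l2 f := le_antisymm (by linarith) d1
    have ha1 : x 0 = (g1 : ℝ) * l2 + off l2 (f - 1) := le_antisymm (by linarith) d3
    rcases off_sub l2 f with hd | hd
    · have key : ((2 * (g0 - g1) : ℤ) : ℝ) * l2 = (-1 : ℝ) * l2 := by push_cast; linarith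
      have : (2 * (g0 - g1) : ℤ) = ((-1 : ℤ)) := by
        have := mul_right_cancel₀ (ne_of_gt hl2) key
        exact_mod_cast this
      omega
    · have key : ((2 * (g0 - g1) : ℤ) : ℝ) * l2 = (1 : ℝ) * l2 := by push_cast; linarith
      have : (2 * (g0 - g1) : ℤ) = ((1 : ℤ)) := by
        have := mul_right_cancel₀ (ne_of_gt hl2) key
        exact_mod_cast this
      omega
  have hpart2 : ∃ r : ℝ, 0 < r ∧ r ≤ l1 / 2 ∧
      {p : ℤ × ℤ | (brick l1 l2 p.1 p.2 ∩ Metric.ball x r).Nonempty} ⊆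
      {p : ℤ × ℤ | x ∈ brick l1 l2 p.1 p.2} := by
    set F : Finset (ℤ × ℤ) :=
      Finset.Icc (⌊x 1 / l1⌋ - 1) (⌊x 1 / l1⌋ + 1) ×ˢ Finset.Icc (⌊x 0 / l2⌋ - 2) (⌊x 0 / l2⌋ + 1)
      with hF
    have hFne : F.Nonempty := by
      refine ⟨(⌊x 1 / l1⌋, ⌊x 0 / l2⌋), ?_⟩
      rw [hF, Finset.mem_product, Finset.mem_Icc, Finset.mem_Icc]
      omega
    set g : ℤ × ℤ → ℝ := fun p =>
      if x ∈ brick l1 l2 p.1 p.2 then l1 / 2 else infDist x (brick l1 l2 p.1 p.2) with hg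
    set r := min (l1 / 2) (F.inf' hFne g) with hr
    have hrle : r ≤ l1 / 2 := min_le_left _ _
    have hrpos : 0 < r := by
      refine lt_min (by linarith) ?_
      rw [Finset.lt_inf'_iff]
      intro p _
      by_cases hxp : x ∈ brick l1 l2 p.1 p.2
      · simp only [hg, if_pos hxp]; linarith
      · simp only [hg, if_neg hxp]
        exact ((brick_isClosed l1 l2 p.1 p.2).notMem_iff_infDist_pos
          (brick_nonempty h1 hl2 p.1 p.2)).1 hxp
    refine ⟨r, hrpos, hrle, ?_⟩
    rintro ⟨i, j⟩ ⟨q, hq, hqball⟩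
    have hdq : dist q x < r := mem_ball.mp hqball
    have hq0 : |q 0 - x 0| < r := lt_of_le_of_lt (abs_coord_le_dist q x 0) hdq
    have hq1 : |q 1 - x 1| < r := lt_of_le_of_lt (abs_coord_le_dist q x 1) hdq
    obtain ⟨e1, e2, e3, e4⟩ := mem_brick_iff.mp hq
    have hoff0 := off_nonneg (le_of_lt hl2) i
    have hoff1 := off_le (le_of_lt hl2) i
    have hb1 : (⌊x 1 / l1⌋ : ℝ) ≤ x 1 / l1 := Int.floor_le _
    have hb2 : x 1 / l1 < (⌊x 1 / l1⌋ : ℝ) + 1 := Int.lt_floor_add_one _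
    have ha1 : (⌊x 0 / l2⌋ : ℝ) ≤ x 0 / l2 := Int.floor_le _
    have ha2 : x 0 / l2 < (⌊x 0 / l2⌋ : ℝ) + 1 := Int.lt_floor_add_one _
    have habs0 := abs_lt.mp hq0
    have habs1 := abs_lt.mp hq1
    have hiF : (i, j) ∈ F := by
      rw [hF, Finset.mem_product, Finset.mem_Icc, Finset.mem_Icc]
      have hlow : ⌊x 1 / l1⌋ - 1 ≤ i := by
        have : x 1 / l1 < (i : ℝ) + 3/2 := by
          rw [div_lt_iff₀ h1]; nlinarith [habs1.1, habs1.2]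
        have h' : (⌊x 1 / l1⌋ : ℝ) < ((i + 2 : ℤ) : ℝ) := by push_cast; linarith
        have := Int.cast_lt.mp h'
        omega
      have hhigh : i ≤ ⌊x 1 / l1⌋ + 1 := by
        have : ((i : ℝ) - 1/2) * l1 < x 1 := by nlinarith [habs1.1, habs1.2]
        have h2' : (i : ℝ) - 1/2 < x 1 / l1 := (lt_div_iff₀ h1).2 this
        have h' : ((i : ℤ) : ℝ) < ((⌊x 1 / l1⌋ + 2 : ℤ) : ℝ) := by push_cast; linarith
        have := Int.cast_lt.mp h'
        omega
      have hjlow : ⌊x 0 / l2⌋ - 2 ≤ j := by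
        have : x 0 / l2 < (j : ℝ) + 2 := by
          rw [div_lt_iff₀ hl2]; nlinarith [habs0.1, habs0.2]
        have h' : (⌊x 0 / l2⌋ : ℝ) < ((j + 2 : ℤ) : ℝ) := by push_cast; linarith
        have := Int.cast_lt.mp h'
        omega
      have hjhigh : j ≤ ⌊x 0 / l2⌋ + 1 := by
        have : ((j : ℝ) - 1/2) * l2 < x 0 := by nlinarith [habs0.1, habs0.2]
        have h2' : (j : ℝ) - 1/2 < x 0 / l2 := (lt_div_iff₀ hl2).2 this
        have h' : ((j : ℤ) : ℝ) < ((⌊x 0 / l2⌋ + 2 : ℤ) : ℝ) := by push_cast; linarith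
        have := Int.cast_lt.mp h'
        omega
      exact ⟨⟨hlow, hhigh⟩, hjlow, hjhigh⟩
    simp only [mem_setOf_eq]
    by_contra hxmem
    have hrge : r ≤ infDist x (brick l1 l2 i j) := by
      have hgp : g (i, j) = infDist x (brick l1 l2 i j) := if_neg hxmem
      calc r ≤ F.inf' hFne g := min_le_right _ _
        _ ≤ g (i, j) := Finset.inf'_le g hiF
        _ = _ := hgp
    have hle : infDist x (brick l1 l2 i j) ≤ dist x q := infDist_le_dist_of_mem hq
    rw [dist_comm] at hle
    linarith
  obtain ⟨r, hrpos, hrle, hsub2⟩ := hpart2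
  exact ⟨hpart1, r, hrpos, hrle, le_trans (Set.encard_mono hsub2) hpart1⟩
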